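/- arXiv:1304.5798 — 2 statements merged into one kernel-verified Lean document; each statement's English description precedes it below -/
import Mathlib

section
/- Let m ≥ 1. The map g defined by g(u) = ρ(α u⁻¹ β⁻¹) restricts to a bijection from the segment [id, w_{2m+1}] onto B_{2m+2}; in particular the cardinality of the segment [id, w_{2m+1}] in S_{2m+1} equals the cardinality of B_{2m+2}. -/
/-- Membership in `S_n`, realized as permutations of `ℕ` fixing every point
outside `{1, …, n}`. -/
def InSymm (n : ℕ) (π : Equiv.Perm ℕ) : Prop :=
  ∀ i : ℕ, i ∉ Finset.Icc 1 n → π i = i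

/-- The ℓ¹-distance `D(u,v) = ∑_{i=1}^n |u(i) − v(i)|` on `S_n`. -/
def permDist (n : ℕ) (u v : Equiv.Perm ℕ) : ℤ :=
  ∑ i ∈ Finset.Icc 1 n, |(u i : ℤ) - (v i : ℤ)|

/-!
On `S_{2m+1}`, `ρ` is right multiplication by the transposition `(2m+1 2m+2)`, so `g` is injective,
and it reaches every `π ∈ B_{2m+2}`, since such a `π` has `π(2m+1) = 2m+2`.
Equality in the triangle inequality `D(id, v) + D(v, w) = D(id, w)` holds term by term: every
`v(j)` lies between `j` and `w(j)`. As `g(v)(β(k)) = α(v⁻¹(k))`, with `k = v(j)` and the explicit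
values of `w` and `α` this condition at `j` becomes the condition `π(2i) ≤ 2i` (for `k = i ≤ m`),
resp. `2i ≤ π(2i-1)` (for `k = m+1+i`), on `π = g(v)` at the position `β(k)`.
-/

open Finset Equiv

namespace InSymm

variable {n : ℕ} {π σ : Perm ℕ}

lemma apply_mem (h : InSymm n π) {i : ℕ} (hi : i ∈ Icc 1 n) : π i ∈ Icc 1 n := by
  by_contra hπi
  rw [π.injective (h _ hπi)] at hπi
  exact hπi hi

lemma apply_eq_of_le (h : InSymm n π) {i : ℕ} (hi : i ∈ Icc 1 n) (hle : n ≤ π i) : π i = n :=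
  le_antisymm (mem_Icc.1 (h.apply_mem hi)).2 hle

lemma inv (h : InSymm n π) : InSymm n π⁻¹ := fun i hi => by
  rw [Perm.inv_eq_iff_eq, h i hi]

lemma mul (hπ : InSymm n π) (hσ : InSymm n σ) : InSymm n (π * σ) := fun i hi => by
  rw [Perm.mul_apply, hσ i hi, hπ i hi]

lemma forall_mem_Icc_apply_iff (h : InSymm n π) {P : ℕ → ℕ → Prop} :
    (∀ j ∈ Icc 1 n, P j (π j)) ↔ ∀ k ∈ Icc 1 n, P (π⁻¹ k) k := by
  refine ⟨fun hP k hk => ?_, fun hP j hj => ?_⟩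
  · simpa using hP _ (h.inv.apply_mem hk)
  · simpa using hP _ (h.apply_mem hj)

/-- This identifies `ρ(σ)` with `σ * swap n (n + 1)`. -/
lemma eq_mul_swap (hσ : InSymm n σ) (hπ : InSymm (n + 1) π)
    (hlt : ∀ i, 1 ≤ i → i < n → π i = σ i) (hn : π n = n + 1) (hsucc : π (n + 1) = σ n) :
    π = σ * swap n (n + 1) := by
  ext i
  rw [Perm.mul_apply]
  rcases eq_or_ne i n with rfl | hin
  · rw [swap_apply_left, hn, hσ _ (by simp)]
  rcases eq_or_ne i (n + 1) with rfl | hin'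
  · rw [swap_apply_right, hsucc]
  rw [swap_apply_of_ne_of_ne hin hin']
  by_cases hi : 1 ≤ i ∧ i < n
  · exact hlt i hi.1 hi.2
  · rw [hπ i (by rw [mem_Icc]; omega), hσ i (by rw [mem_Icc]; omega)]

lemma mul_swap (hπ : InSymm (n + 1) π) (hn : π n = n + 1) : InSymm n (π * swap n (n + 1)) := by
  intro i hi
  rw [Perm.mul_apply]
  rcases eq_or_ne i (n + 1) with rfl | hin'
  · rw [swap_apply_right, hn]
  rcases eq_or_ne i n with rfl | hin
  · obtain rfl : i = 0 := by simpa using hi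
    exact absurd (hπ 0 (by simp)) (by simp [hn])
  rw [swap_apply_of_ne_of_ne hin hin', hπ i (by rw [mem_Icc] at hi ⊢; omega)]

end InSymm

lemma abs_sub_add_abs_sub_eq_iff (a b c : ℤ) :
    |a - b| + |b - c| = |a - c| ↔ b ∈ Set.uIcc a c := by
  rw [← sub_add_sub_cancel a b c, eq_comm, abs_add_eq_add_abs_iff, Set.mem_uIcc]
  omega

lemma permDist_add_permDist_eq_iff {n : ℕ} {u v w : Perm ℕ} :
    permDist n u v + permDist n v w = permDist n u w ↔
      ∀ i ∈ Icc 1 n, v i ∈ Set.uIcc (u i) (w i) := by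
  rw [permDist, permDist, permDist, ← sum_add_distrib, eq_comm,
    sum_eq_sum_iff_of_le fun i _ => abs_sub_le _ _ _]
  refine forall₂_congr fun i _ => ?_
  rw [eq_comm, abs_sub_add_abs_sub_eq_iff, Set.mem_uIcc, Set.mem_uIcc]
  omega

lemma mem_uIcc_w_iff {m : ℕ} {w α : Perm ℕ}
    (hw1 : ∀ j, 1 ≤ j → j ≤ m + 1 → w j = j + m)
    (hw2 : ∀ j, m + 2 ≤ j → j ≤ 2 * m + 1 → w j = j - m - 1)
    (hα1 : ∀ j, 1 ≤ j → j ≤ m + 1 → α j = 2 * j - 1)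
    (hα2 : ∀ j, m + 2 ≤ j → j ≤ 2 * m + 1 → α j = 2 * j - 2 * m - 2)
    {j : ℕ} (hj : j ∈ Icc 1 (2 * m + 1)) (k : ℕ) :
    k ∈ Set.uIcc j (w j) ↔ (k ≤ m → α j ≤ 2 * k) ∧ (m + 2 ≤ k → 2 * (k - m - 1) ≤ α j) := by
  obtain ⟨hj1, hj2⟩ := mem_Icc.1 hj
  rw [Set.mem_uIcc]
  rcases le_or_gt j (m + 1) with hjm | hjm
  · rw [hw1 j hj1 hjm, hα1 j hj1 hjm]
    omega
  · rw [hw2 j hjm hj2, hα2 j hjm hj2]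
    omega

lemma forall_mem_Icc_bounds_iff (m : ℕ) (f : ℕ → ℕ) :
    (∀ k ∈ Icc 1 (2 * m + 1), (k ≤ m → f k ≤ 2 * k) ∧ (m + 2 ≤ k → 2 * (k - m - 1) ≤ f k)) ↔
      ∀ i, 1 ≤ i → i ≤ m → f i ≤ 2 * i ∧ 2 * i ≤ f (m + 1 + i) := by
  refine ⟨fun h i hi1 him => ⟨(h i (by rw [mem_Icc]; omega)).1 him, ?_⟩, fun h k hk => ⟨?_, ?_⟩⟩
  · have := (h (m + 1 + i) (by rw [mem_Icc]; omega)).2 (by omega)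
    rwa [show m + 1 + i - m - 1 = i by omega] at this
  · exact fun hkm => (h k (mem_Icc.1 hk).1 hkm).1
  · intro hkm
    have := (h (k - m - 1) (by omega) (by rw [mem_Icc] at hk; omega)).2
    rwa [show m + 1 + (k - m - 1) = k by omega] at this

lemma permDist_segment_w_iff {m : ℕ} {w α u : Perm ℕ}
    (hw1 : ∀ j, 1 ≤ j → j ≤ m + 1 → w j = j + m)
    (hw2 : ∀ j, m + 2 ≤ j → j ≤ 2 * m + 1 → w j = j - m - 1)
    (hα1 : ∀ j, 1 ≤ j → j ≤ m + 1 → α j = 2 * j - 1)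
    (hα2 : ∀ j, m + 2 ≤ j → j ≤ 2 * m + 1 → α j = 2 * j - 2 * m - 2)
    (hu : InSymm (2 * m + 1) u) :
    permDist (2 * m + 1) 1 u + permDist (2 * m + 1) u w = permDist (2 * m + 1) 1 w ↔
      ∀ i, 1 ≤ i → i ≤ m → α (u⁻¹ i) ≤ 2 * i ∧ 2 * i ≤ α (u⁻¹ (m + 1 + i)) := by
  rw [permDist_add_permDist_eq_iff, ← forall_mem_Icc_bounds_iff]
  simp only [Perm.one_apply]
  rw [hu.forall_mem_Icc_apply_iff (P := fun j k => k ∈ Set.uIcc j (w j))]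
  exact forall₂_congr fun k hk => mem_uIcc_w_iff hw1 hw2 hα1 hα2 (hu.inv.apply_mem hk) k

lemma mul_swap_B_cond_iff {m : ℕ} {σ : Perm ℕ} (hσ : InSymm (2 * m + 1) σ) :
    (∀ i, 1 ≤ i → i ≤ m + 1 →
      (σ * swap (2 * m + 1) (2 * m + 2)) (2 * i) ≤ 2 * i ∧
        2 * i ≤ (σ * swap (2 * m + 1) (2 * m + 2)) (2 * i - 1)) ↔
      ∀ i, 1 ≤ i → i ≤ m → σ (2 * i) ≤ 2 * i ∧ 2 * i ≤ σ (2 * i - 1) := by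
  have hlast : σ (2 * m + 1) ≤ 2 * m + 2 ∧ 2 * m + 2 ≤ σ (2 * m + 2) := by
    have := mem_Icc.1 (hσ.apply_mem (i := 2 * m + 1) (by simp))
    rw [hσ (2 * m + 2) (by simp)]
    omega
  have hfix : ∀ p ≤ 2 * m, swap (2 * m + 1) (2 * m + 2) p = p := fun p hp =>
    swap_apply_of_ne_of_ne (by omega) (by omega)
  refine ⟨fun h i hi1 him => ?_, fun h i hi1 him => ?_⟩
  · simpa only [Perm.mul_apply, hfix (2 * i) (by omega), hfix (2 * i - 1) (by omega)] using
      h i hi1 (by omega)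
  · rcases eq_or_lt_of_le him with rfl | him
    · simpa [show 2 * (m + 1) = 2 * m + 2 by ring, show 2 * m + 2 - 1 = 2 * m + 1 by omega] using
        hlast
    · simpa only [Perm.mul_apply, hfix (2 * i) (by omega), hfix (2 * i - 1) (by omega)] using
        h i hi1 (by omega)

lemma inv_apply_two_mul_and_two_mul_sub_one {m : ℕ} {β : Perm ℕ}
    (hβ1 : ∀ j, 1 ≤ j → j ≤ m → β j = 2 * j)
    (hβ3 : ∀ j, m + 2 ≤ j → j ≤ 2 * m + 1 → β j = 2 * j - 2 * m - 3)
    {i : ℕ} (hi1 : 1 ≤ i) (him : i ≤ m) :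
    β⁻¹ (2 * i) = i ∧ β⁻¹ (2 * i - 1) = m + 1 + i := by
  rw [Perm.inv_eq_iff_eq, Perm.inv_eq_iff_eq, hβ1 i hi1 him, hβ3 _ (by omega) (by omega)]
  omega

theorem g_bijOn_segment_B_general (m : ℕ) (w α β : Equiv.Perm ℕ)
    -- `w` is `w_{2m+1}` with one-line notation `(m+1, …, 2m+1, 1, …, m)`
    (hw1 : ∀ j, 1 ≤ j → j ≤ m + 1 → w j = j + m)
    (hw2 : ∀ j, m + 2 ≤ j → j ≤ 2 * m + 1 → w j = j - m - 1)
    -- `α` has one-line notation `(1, 3, …, 2m+1, 2, 4, …, 2m)`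
    (hα0 : InSymm (2 * m + 1) α)
    (hα1 : ∀ j, 1 ≤ j → j ≤ m + 1 → α j = 2 * j - 1)
    (hα2 : ∀ j, m + 2 ≤ j → j ≤ 2 * m + 1 → α j = 2 * j - 2 * m - 2)
    -- `β` has one-line notation `(2, 4, …, 2m, 2m+1, 1, 3, …, 2m−1)`
    (hβ0 : InSymm (2 * m + 1) β)
    (hβ1 : ∀ j, 1 ≤ j → j ≤ m → β j = 2 * j)
    (hβ3 : ∀ j, m + 2 ≤ j → j ≤ 2 * m + 1 → β j = 2 * j - 2 * m - 3)
    (G : Equiv.Perm ℕ → Equiv.Perm ℕ)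
    -- `G u = ρ(α u⁻¹ β⁻¹)` for every `u ∈ S_{2m+1}`
    (hG : ∀ u : Equiv.Perm ℕ, InSymm (2 * m + 1) u →
      InSymm (2 * m + 2) (G u) ∧
      (∀ i, 1 ≤ i → i ≤ 2 * m → G u i = (α * u⁻¹ * β⁻¹) i) ∧
      G u (2 * m + 1) = 2 * m + 2 ∧
      G u (2 * m + 2) = (α * u⁻¹ * β⁻¹) (2 * m + 1)) :
    Set.BijOn G
      {v : Equiv.Perm ℕ | InSymm (2 * m + 1) v ∧
        permDist (2 * m + 1) 1 v + permDist (2 * m + 1) v w = permDist (2 * m + 1) 1 w}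
      {π : Equiv.Perm ℕ | InSymm (2 * m + 2) π ∧
        ∀ i, 1 ≤ i → i ≤ m + 1 → π (2 * i) ≤ 2 * i ∧ 2 * i ≤ π (2 * i - 1)} ∧
    Set.ncard
      {v : Equiv.Perm ℕ | InSymm (2 * m + 1) v ∧
        permDist (2 * m + 1) 1 v + permDist (2 * m + 1) v w = permDist (2 * m + 1) 1 w} =
    Set.ncard
      {π : Equiv.Perm ℕ | InSymm (2 * m + 2) π ∧
        ∀ i, 1 ≤ i → i ≤ m + 1 → π (2 * i) ≤ 2 * i ∧ 2 * i ≤ π (2 * i - 1)} := by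
  set τ := swap (2 * m + 1) (2 * m + 2)
  have hGu : ∀ u, InSymm (2 * m + 1) u → G u = α * u⁻¹ * β⁻¹ * τ := fun u hu =>
    have ⟨hGS, hG_le, hG_n, hG_succ⟩ := hG u hu
    ((hα0.mul hu.inv).mul hβ0.inv).eq_mul_swap hGS (fun i hi1 hi2 => hG_le i hi1 (by omega))
      hG_n hG_succ
  have hseg_iff : ∀ u, InSymm (2 * m + 1) u →
      (permDist (2 * m + 1) 1 u + permDist (2 * m + 1) u w = permDist (2 * m + 1) 1 w ↔
        ∀ i, 1 ≤ i → i ≤ m + 1 → G u (2 * i) ≤ 2 * i ∧ 2 * i ≤ G u (2 * i - 1)) := by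
    intro u hu
    rw [permDist_segment_w_iff hw1 hw2 hα1 hα2 hu, hGu u hu,
      mul_swap_B_cond_iff ((hα0.mul hu.inv).mul hβ0.inv)]
    refine forall₃_congr fun i hi1 him => ?_
    obtain ⟨hβ_even, hβ_odd⟩ := inv_apply_two_mul_and_two_mul_sub_one hβ1 hβ3 hi1 him
    simp only [Perm.mul_apply, hβ_even, hβ_odd]
  refine (fun hbij : Set.BijOn G _ _ => ⟨hbij, hbij.ncard_eq⟩) ?_
  refine ⟨fun u ⟨hu, hseg⟩ => ⟨(hG u hu).1, (hseg_iff u hu).1 hseg⟩, ?_, ?_⟩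
  · rintro u ⟨hu, -⟩ v ⟨hv, -⟩ huv
    rw [hGu u hu, hGu v hv] at huv
    simpa using huv
  · rintro π ⟨hπ, hB⟩
    have hπn : π (2 * m + 1) = 2 * m + 2 :=
      hπ.apply_eq_of_le (by simp) (by simpa [mul_add] using (hB (m + 1) (by omega) le_rfl).2)
    have hu : InSymm (2 * m + 1) (β⁻¹ * (π * τ)⁻¹ * α) :=
      (hβ0.inv.mul (InSymm.mul_swap hπ hπn).inv).mul hα0
    have hGπ : G (β⁻¹ * (π * τ)⁻¹ * α) = π := by
      rw [hGu _ hu]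
      simp [τ, mul_assoc]
    exact ⟨_, ⟨hu, (hseg_iff _ hu).2 (by rwa [hGπ])⟩, hGπ⟩

/-- `g : u ↦ ρ(α u⁻¹ β⁻¹)` restricts to a bijection from the
segment `[id, w_{2m+1}]` onto `B_{2m+2}`; in particular the two sets have the
same cardinality. -/
theorem g_bijOn_segment_B (m : ℕ) (hm : 1 ≤ m) (w α β : Equiv.Perm ℕ)
    -- `w` is `w_{2m+1}` with one-line notation `(m+1, …, 2m+1, 1, …, m)`
    (hw0 : InSymm (2 * m + 1) w)
    (hw1 : ∀ j, 1 ≤ j → j ≤ m + 1 → w j = j + m)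
    (hw2 : ∀ j, m + 2 ≤ j → j ≤ 2 * m + 1 → w j = j - m - 1)
    -- `α` has one-line notation `(1, 3, …, 2m+1, 2, 4, …, 2m)`
    (hα0 : InSymm (2 * m + 1) α)
    (hα1 : ∀ j, 1 ≤ j → j ≤ m + 1 → α j = 2 * j - 1)
    (hα2 : ∀ j, m + 2 ≤ j → j ≤ 2 * m + 1 → α j = 2 * j - 2 * m - 2)
    -- `β` has one-line notation `(2, 4, …, 2m, 2m+1, 1, 3, …, 2m−1)`
    (hβ0 : InSymm (2 * m + 1) β)
    (hβ1 : ∀ j, 1 ≤ j → j ≤ m → β j = 2 * j)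
    (hβ2 : β (m + 1) = 2 * m + 1)
    (hβ3 : ∀ j, m + 2 ≤ j → j ≤ 2 * m + 1 → β j = 2 * j - 2 * m - 3)
    (G : Equiv.Perm ℕ → Equiv.Perm ℕ)
    -- `G u = ρ(α u⁻¹ β⁻¹)` for every `u ∈ S_{2m+1}`
    (hG : ∀ u : Equiv.Perm ℕ, InSymm (2 * m + 1) u →
      InSymm (2 * m + 2) (G u) ∧
      (∀ i, 1 ≤ i → i ≤ 2 * m → G u i = (α * u⁻¹ * β⁻¹) i) ∧
      G u (2 * m + 1) = 2 * m + 2 ∧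
      G u (2 * m + 2) = (α * u⁻¹ * β⁻¹) (2 * m + 1)) :
    Set.BijOn G
      {v : Equiv.Perm ℕ | InSymm (2 * m + 1) v ∧
        permDist (2 * m + 1) 1 v + permDist (2 * m + 1) v w = permDist (2 * m + 1) 1 w}
      {π : Equiv.Perm ℕ | InSymm (2 * m + 2) π ∧
        ∀ i, 1 ≤ i → i ≤ m + 1 → π (2 * i) ≤ 2 * i ∧ 2 * i ≤ π (2 * i - 1)} ∧
    Set.ncard
      {v : Equiv.Perm ℕ | InSymm (2 * m + 1) v ∧
        permDist (2 * m + 1) 1 v + permDist (2 * m + 1) v w = permDist (2 * m + 1) 1 w} =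
    Set.ncard
      {π : Equiv.Perm ℕ | InSymm (2 * m + 2) π ∧
        ∀ i, 1 ≤ i → i ≤ m + 1 → π (2 * i) ≤ 2 * i ∧ 2 * i ≤ π (2 * i - 1)} :=
  g_bijOn_segment_B_general m w α β hw1 hw2 hα0 hα1 hα2 hβ0 hβ1 hβ3 G hG
end

section
/- Let m ≥ 2 and 2 ≤ i ≤ m. For every permutation u ∈ S_{2m}, one has h(u)(2i−1) = α(u⁻¹(i+m)) + 1, and the inequality h(u)(2i−1) ≥ 2i holds if and only if u⁻¹(i+m) ∈ [i, m] ∪ [m+i, 2m]. -/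
theorem InSymm.inv_apply_mem_Icc {n : ℕ} {π : Equiv.Perm ℕ} (hπ : InSymm n π) {j : ℕ}
    (hj : j ∈ Finset.Icc 1 n) : π⁻¹ j ∈ Finset.Icc 1 n := by
  by_contra hk
  have hfix : j = π⁻¹ j := by simpa using hπ _ hk
  exact hk (hfix ▸ hj)

theorem two_mul_le_riffle_add_one_iff {m i k : ℕ} {α : Equiv.Perm ℕ}
    (hα1 : ∀ j, 1 ≤ j → j ≤ m → α j = 2 * j - 1)
    (hα2 : ∀ j, m + 1 ≤ j → j ≤ 2 * m → α j = 2 * j - 2 * m)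
    (hk : k ∈ Finset.Icc 1 (2 * m)) :
    2 * i ≤ α k + 1 ↔ k ∈ Finset.Icc i m ∪ Finset.Icc (m + i) (2 * m) := by
  rw [Finset.mem_Icc] at hk
  rw [Finset.mem_union, Finset.mem_Icc, Finset.mem_Icc]
  rcases le_or_gt k m with hkm | hkm
  · rw [hα1 k hk.1 hkm]; omega
  · rw [hα2 k hkm hk.2]; omega

theorem h_odd_positions_general (m : ℕ) (i : ℕ) (hi1 : 2 ≤ i) (hi2 : i ≤ m)
    (α β : Equiv.Perm ℕ)
    -- `α` has one-line notation `(1, 3, …, 2m−1, 2, 4, …, 2m)`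
    (hα1 : ∀ j, 1 ≤ j → j ≤ m → α j = 2 * j - 1)
    (hα2 : ∀ j, m + 1 ≤ j → j ≤ 2 * m → α j = 2 * j - 2 * m)
    -- `β` has one-line notation `(3, 5, …, 2m−1, 1, 2m, 2, 4, …, 2m−2)`
    (hβ4 : ∀ j, m + 2 ≤ j → j ≤ 2 * m → β j = 2 * j - 2 * m - 2)
    (u : Equiv.Perm ℕ) (hu : InSymm (2 * m) u) (hp : Equiv.Perm ℕ)
    -- `hp = h(u) = η(α u⁻¹ β⁻¹)`
    (hh3 : ∀ i, 3 ≤ i → i ≤ 2 * m → hp i = (α * u⁻¹ * β⁻¹) (i - 1) + 1)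
    :
    hp (2 * i - 1) = α (u⁻¹ (i + m)) + 1 ∧
      (2 * i ≤ hp (2 * i - 1) ↔
        u⁻¹ (i + m) ∈ Finset.Icc i m ∪ Finset.Icc (m + i) (2 * m)) := by
  have hβ_inv : β⁻¹ (2 * i - 2) = i + m := by
    rw [Equiv.Perm.inv_eq_iff_eq, hβ4 (i + m) (by omega) (by omega)]
    omega
  have hp_odd : hp (2 * i - 1) = α (u⁻¹ (i + m)) + 1 := by
    rw [hh3 (2 * i - 1) (by omega) (by omega), show 2 * i - 1 - 1 = 2 * i - 2 by omega]
    simp only [Equiv.Perm.mul_apply, hβ_inv]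
  have hu_inv : u⁻¹ (i + m) ∈ Finset.Icc 1 (2 * m) :=
    hu.inv_apply_mem_Icc (Finset.mem_Icc.mpr ⟨by omega, by omega⟩)
  exact ⟨hp_odd, hp_odd ▸ two_mul_le_riffle_add_one_iff hα1 hα2 hu_inv⟩

/-- for `2 ≤ i ≤ m`, `h(u)(2i−1) = α(u⁻¹(i+m)) + 1`, and
`h(u)(2i−1) ≥ 2i` iff `u⁻¹(i+m) ∈ [i, m] ∪ [m+i, 2m]`. -/
theorem h_odd_positions (m : ℕ) (hm : 2 ≤ m) (i : ℕ) (hi1 : 2 ≤ i) (hi2 : i ≤ m)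
    (α β : Equiv.Perm ℕ)
    -- `α` has one-line notation `(1, 3, …, 2m−1, 2, 4, …, 2m)`
    (hα0 : InSymm (2 * m) α)
    (hα1 : ∀ j, 1 ≤ j → j ≤ m → α j = 2 * j - 1)
    (hα2 : ∀ j, m + 1 ≤ j → j ≤ 2 * m → α j = 2 * j - 2 * m)
    -- `β` has one-line notation `(3, 5, …, 2m−1, 1, 2m, 2, 4, …, 2m−2)`
    (hβ0 : InSymm (2 * m) β)
    (hβ1 : ∀ j, 1 ≤ j → j ≤ m - 1 → β j = 2 * j + 1)
    (hβ2 : β m = 1)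
    (hβ3 : β (m + 1) = 2 * m)
    (hβ4 : ∀ j, m + 2 ≤ j → j ≤ 2 * m → β j = 2 * j - 2 * m - 2)
    (u : Equiv.Perm ℕ) (hu : InSymm (2 * m) u) (hp : Equiv.Perm ℕ)
    -- `hp = h(u) = η(α u⁻¹ β⁻¹)`
    (hh0 : InSymm (2 * m + 2) hp)
    (hh1 : hp 1 = (α * u⁻¹ * β⁻¹) 1 + 1)
    (hh2 : hp 2 = 1)
    (hh3 : ∀ i, 3 ≤ i → i ≤ 2 * m → hp i = (α * u⁻¹ * β⁻¹) (i - 1) + 1)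
    (hh4 : hp (2 * m + 1) = 2 * m + 2)
    (hh5 : hp (2 * m + 2) = (α * u⁻¹ * β⁻¹) (2 * m) + 1)
    :
    hp (2 * i - 1) = α (u⁻¹ (i + m)) + 1 ∧
      (2 * i ≤ hp (2 * i - 1) ↔
        u⁻¹ (i + m) ∈ Finset.Icc i m ∪ Finset.Icc (m + i) (2 * m)) :=
  h_odd_positions_general m i hi1 hi2 α β hα1 hα2 hβ4 u hu hp hh3
end
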